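/- Let X ⊆ {d,t,4}, Y ⊆ {d,t,b,4,5}, x ∈ X, y ∈ Y, and let r be an instance, with premise Γ₁ and conclusion Γ₂, of one of the rules ◇∘x, □•x, or of the structural rule y•. Then fm(Γ₁)⊃fm(Γ₂) is provable in HCK+X+Y. -/

import Mathlib

/-! # Constructive modal logic: formulas and Hilbert systems -/

inductive Formula : Type
  | var : Nat → Formula
  | bot : Formula
  | and : Formula → Formula → Formula
  | or  : Formula → Formula → Formula
  | imp : Formula → Formula → Formula
  | box : Formula → Formula
  | dia : Formula → Formula
  deriving DecidableEq

/-- ⊤ abbreviates ⊥⊃⊥ -/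
def Formula.top : Formula := Formula.imp Formula.bot Formula.bot

/-- The five modal axioms d, t, b, 4, 5. -/
inductive Ax : Type
  | d | t | b | four | five
  deriving DecidableEq

/-- The formula scheme corresponding to each modal axiom. -/
def axForm : Ax → Formula → Formula
  | .d, A => Formula.imp (.box A) (.dia A)
  | .t, A => Formula.and (.imp A (.dia A)) (.imp (.box A) A)
  | .b, A => Formula.and (.imp A (.box (.dia A))) (.imp (.dia (.box A)) A)
  | .four, A => Formula.and (.imp (.dia (.dia A)) (.dia A)) (.imp (.box A) (.box (.box A)))
  | .five, A => Formula.and (.imp (.dia A) (.box (.dia A))) (.imp (.dia (.box A)) (.box A))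

/-- The Hilbert system HCK+X: a complete axiomatization of intuitionistic
propositional logic, plus k1 and k2, plus the modal axiom schemes in X,
closed under modus ponens and necessitation. -/
inductive Hck (X : Set Ax) : Formula → Prop
  | imp1 (A B : Formula) : Hck X (.imp A (.imp B A))
  | imp2 (A B C : Formula) :
      Hck X (.imp (.imp A (.imp B C)) (.imp (.imp A B) (.imp A C)))
  | andI (A B : Formula) : Hck X (.imp A (.imp B (.and A B)))
  | andE1 (A B : Formula) : Hck X (.imp (.and A B) A)
  | andE2 (A B : Formula) : Hck X (.imp (.and A B) B)
  | orI1 (A B : Formula) : Hck X (.imp A (.or A B))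
  | orI2 (A B : Formula) : Hck X (.imp B (.or A B))
  | orE (A B C : Formula) :
      Hck X (.imp (.imp A C) (.imp (.imp B C) (.imp (.or A B) C)))
  | exfalso (A : Formula) : Hck X (.imp .bot A)
  | k1 (A B : Formula) : Hck X (.imp (.box (.imp A B)) (.imp (.box A) (.box B)))
  | k2 (A B : Formula) : Hck X (.imp (.box (.imp A B)) (.imp (.dia A) (.dia B)))
  | ax {x : Ax} (A : Formula) : x ∈ X → Hck X (axForm x A)
  | mp {A B : Formula} : Hck X (.imp A B) → Hck X A → Hck X B
  | nec {A : Formula} : Hck X A → Hck X (.box A)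

/-! # Nested sequents -/

/-- LHS sequents: Φ ::= ∅ | A• | [Φ] | Φ,Φ -/
inductive LHS : Type
  | emp : LHS
  | fml : Formula → LHS
  | br : LHS → LHS
  | comma : LHS → LHS → LHS

/-- RHS sequents: Ψ ::= A∘ | [Φ,Ψ] -/
inductive RHS : Type
  | fml : Formula → RHS
  | br : LHS → RHS → RHS

/-- A full sequent: Φ,Ψ with exactly one output formula. -/
structure FullSeq where
  L : LHS
  R : RHS

/-- Corresponding formula of an LHS sequent. -/
def LHS.fm : LHS → Formula
  | .emp => Formula.top
  | .fml A => A
  | .br Φ => Formula.dia Φ.fm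
  | .comma Φ₁ Φ₂ => Formula.and Φ₁.fm Φ₂.fm

/-- Corresponding formula of an RHS sequent. -/
def RHS.fm : RHS → Formula
  | .fml A => A
  | .br Φ Ψ => Formula.box (Formula.imp Φ.fm Ψ.fm)

/-- Corresponding formula of a full sequent: fm(Φ,Ψ) = fm(Φ) ⊃ fm(Ψ). -/
def FullSeq.fm (S : FullSeq) : Formula := Formula.imp S.L.fm S.R.fm

/-! # Contexts -/

/-- An output context: Γ₁•,[Γ₂•,[…,[Γₙ•,{ }]…]]. -/
inductive OutCtx : Type
  | hole : LHS → OutCtx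
  | cons : LHS → OutCtx → OutCtx

/-- Filling an output context with an LHS sequent yields an LHS sequent. -/
def OutCtx.fillL : OutCtx → LHS → LHS
  | .hole Φ, Δ => Φ.comma Δ
  | .cons Φ C, Δ => Φ.comma (LHS.br (C.fillL Δ))

/-- Filling an output context with nothing (∅) yields an LHS sequent. -/
def OutCtx.fillE : OutCtx → LHS
  | .hole Φ => Φ
  | .cons Φ C => Φ.comma (LHS.br C.fillE)

/-- Filling an output context with an RHS sequent yields a full sequent. -/
def OutCtx.fillR : OutCtx → RHS → FullSeq
  | .hole Φ, Ψ => ⟨Φ, Ψ⟩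
  | .cons Φ C, Ψ => ⟨Φ, RHS.br (C.fillR Ψ).L (C.fillR Ψ).R⟩

/-- Filling an output context with a full sequent yields a full sequent. -/
def OutCtx.fillF : OutCtx → FullSeq → FullSeq
  | .hole Φ, S => ⟨Φ.comma S.L, S.R⟩
  | .cons Φ C, S => ⟨Φ, RHS.br (C.fillF S).L (C.fillF S).R⟩

/-- Depth of an output context: number of brackets around the hole. -/
def OutCtx.depth : OutCtx → Nat
  | .hole _ => 0
  | .cons _ C => C.depth + 1

def OutCtx.addL : LHS → OutCtx → OutCtx
  | Φ, .hole Φ' => .hole (Φ.comma Φ')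
  | Φ, .cons Φ' C => .cons (Φ.comma Φ') C

/-- Composition of output contexts (plugging one into the hole of the other). -/
def OutCtx.comp : OutCtx → OutCtx → OutCtx
  | .hole Φ, C => OutCtx.addL Φ C
  | .cons Φ C, C' => .cons Φ (C.comp C')

/-- An input context Γ'{Λ{ },Π∘} with Γ'{ }, Λ{ } output contexts, Π∘ an RHS
sequent.  Filled with an LHS sequent it yields a full sequent. -/
structure InCtx where
  outer : OutCtx
  inner : OutCtx
  out : RHS

/-- Filling an input context with an LHS sequent. -/
def InCtx.fill (G : InCtx) (Δ : LHS) : FullSeq :=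
  G.outer.fillF ⟨G.inner.fillL Δ, G.out⟩

/-- Output pruning Γ↓{ } = Γ'{Λ{ }} of an input context Γ'{Λ{ },Π∘}. -/
def InCtx.prune (G : InCtx) : OutCtx := G.outer.comp G.inner

/-- Depth of an input context. -/
def InCtx.depth (G : InCtx) : Nat := G.outer.depth + G.inner.depth

/-- [Φ]ⁿ : n brackets around an LHS sequent. -/
def LHS.brn : Nat → LHS → LHS
  | 0, Φ => Φ
  | n+1, Φ => LHS.br (LHS.brn n Φ)

/-- [Σ]ⁿ : n brackets around a full sequent (as a full sequent). -/
def FullSeq.nest : Nat → FullSeq → FullSeq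
  | 0, S => S
  | n+1, S => ⟨LHS.emp, RHS.br (FullSeq.nest n S).L (FullSeq.nest n S).R⟩

/-! # Equivalence of sequents (associativity/commutativity/unit of comma) -/

inductive SEqL : LHS → LHS → Prop
  | refl (Φ : LHS) : SEqL Φ Φ
  | symm {a b : LHS} : SEqL a b → SEqL b a
  | trans {a b c : LHS} : SEqL a b → SEqL b c → SEqL a c
  | comm (a b : LHS) : SEqL (a.comma b) (b.comma a)
  | assoc (a b c : LHS) : SEqL ((a.comma b).comma c) (a.comma (b.comma c))
  | unit (a : LHS) : SEqL (LHS.emp.comma a) a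
  | congComma {a a' b b' : LHS} : SEqL a a' → SEqL b b' → SEqL (a.comma b) (a'.comma b')
  | congBr {a a' : LHS} : SEqL a a' → SEqL a.br a'.br

inductive SEqR : RHS → RHS → Prop
  | refl (Ψ : RHS) : SEqR Ψ Ψ
  | symm {a b : RHS} : SEqR a b → SEqR b a
  | trans {a b c : RHS} : SEqR a b → SEqR b c → SEqR a c
  | congBr {Φ Φ' : LHS} {Ψ Ψ' : RHS} :
      SEqL Φ Φ' → SEqR Ψ Ψ' → SEqR (RHS.br Φ Ψ) (RHS.br Φ' Ψ')

def SEq (S T : FullSeq) : Prop := SEqL S.L T.L ∧ SEqR S.R T.R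

/-! # Inference rules -/

inductive RuleName : Type
  | id | botL | andL | andR | orL | orR | impL | impR
  | boxL | boxR | diaL | diaHatL | diaR | cont
  | weak | cut | nec
  | dDiaR | dBoxL | tDiaR | tBoxL | fourDiaR | fourBoxL
  | dSt | tSt | bSt | fourSt | fiveSt
  | s4R | s4L | s4Rdia | s4Lbox
  | sbSt | s5St | s5bSt | sb5St
  deriving DecidableEq

/-- Rule instances: `Step r prems concl` means that inferring the full sequent
`concl` from the list of full sequents `prems` is an instance of the rule `r`. -/
inductive Step : RuleName → List FullSeq → FullSeq → Prop
  /- id: Γ{a•,a∘} -/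
  | id (Γ : OutCtx) (a : Nat) :
      Step .id [] (Γ.fillF ⟨.fml (.var a), .fml (.var a)⟩)
  /- ⊥•: Γ{⊥•,Π∘} -/
  | botL (Γ : OutCtx) (Pn : RHS) :
      Step .botL [] (Γ.fillF ⟨.fml .bot, Pn⟩)
  /- ∧•: from Γ{A•,B•} infer Γ{(A∧B)•} -/
  | andL (Γ : InCtx) (A B : Formula) :
      Step .andL [Γ.fill ((LHS.fml A).comma (.fml B))] (Γ.fill (.fml (A.and B)))
  /- ∧∘: from Γ{A∘} and Γ{B∘} infer Γ{(A∧B)∘} -/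
  | andR (Γ : OutCtx) (A B : Formula) :
      Step .andR [Γ.fillR (.fml A), Γ.fillR (.fml B)] (Γ.fillR (.fml (A.and B)))
  /- ∨•: from Γ{A•,Π∘} and Γ{B•,Π∘} infer Γ{(A∨B)•,Π∘} -/
  | orL (Γ : OutCtx) (Pn : RHS) (A B : Formula) :
      Step .orL [Γ.fillF ⟨.fml A, Pn⟩, Γ.fillF ⟨.fml B, Pn⟩]
        (Γ.fillF ⟨.fml (A.or B), Pn⟩)
  /- ∨∘: from Γ{A∘} (or Γ{B∘}) infer Γ{(A∨B)∘} -/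
  | orR1 (Γ : OutCtx) (A B : Formula) :
      Step .orR [Γ.fillR (.fml A)] (Γ.fillR (.fml (A.or B)))
  | orR2 (Γ : OutCtx) (A B : Formula) :
      Step .orR [Γ.fillR (.fml B)] (Γ.fillR (.fml (A.or B)))
  /- ⊃•: from Γ↓{A∘} and Γ{B•} infer Γ{(A⊃B)•} -/
  | impL (Γ : InCtx) (A B : Formula) :
      Step .impL [Γ.prune.fillR (.fml A), Γ.fill (.fml B)] (Γ.fill (.fml (A.imp B)))
  /- ⊃∘: from Γ{A•,B∘} infer Γ{(A⊃B)∘} -/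
  | impR (Γ : OutCtx) (A B : Formula) :
      Step .impR [Γ.fillF ⟨.fml A, .fml B⟩] (Γ.fillR (.fml (A.imp B)))
  /- □•: from Γ{[A•,Δ]} infer Γ{(□A)•,[Δ]}, output elsewhere resp. in Δ -/
  | boxLIn (Γ : InCtx) (Δ : LHS) (A : Formula) :
      Step .boxL [Γ.fill (LHS.br ((LHS.fml A).comma Δ))]
        (Γ.fill ((LHS.fml A.box).comma Δ.br))
  | boxLOut (Γ : OutCtx) (Δ : FullSeq) (A : Formula) :
      Step .boxL [Γ.fillR (.br ((LHS.fml A).comma Δ.L) Δ.R)]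
        (Γ.fillF ⟨.fml A.box, .br Δ.L Δ.R⟩)
  /- □∘: from Γ{[A∘]} infer Γ{(□A)∘} -/
  | boxR (Γ : OutCtx) (A : Formula) :
      Step .boxR [Γ.fillR (.br .emp (.fml A))] (Γ.fillR (.fml A.box))
  /- ◇•: from Γ{[A•]} infer Γ{(◇A)•} -/
  | diaL (Γ : InCtx) (A : Formula) :
      Step .diaL [Γ.fill (LHS.br (.fml A))] (Γ.fill (.fml A.dia))
  /- ◇̂•: from Γ{[A•],Π∘} infer Γ{(◇A)•,Π∘} -/
  | diaHatL (Γ : OutCtx) (Pn : RHS) (A : Formula) :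
      Step .diaHatL [Γ.fillF ⟨LHS.br (.fml A), Pn⟩] (Γ.fillF ⟨.fml A.dia, Pn⟩)
  /- ◇∘: from Γ{[A∘,Δ]} infer Γ{(◇A)∘,[Δ]} -/
  | diaR (Γ : OutCtx) (Δ : LHS) (A : Formula) :
      Step .diaR [Γ.fillR (.br Δ (.fml A))] (Γ.fillF ⟨Δ.br, .fml A.dia⟩)
  /- cont: from Γ{Δ•,Δ•} infer Γ{Δ•} -/
  | cont (Γ : InCtx) (Δ : LHS) :
      Step .cont [Γ.fill (Δ.comma Δ)] (Γ.fill Δ)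
  /- weak: from Γ{∅} infer Γ{Δ•} -/
  | weak (Γ : InCtx) (Δ : LHS) :
      Step .weak [Γ.fill .emp] (Γ.fill Δ)
  /- cut: from Γ↓{A∘} and Γ{A•} infer Γ{∅} -/
  | cut (Γ : InCtx) (A : Formula) :
      Step .cut [Γ.prune.fillR (.fml A), Γ.fill (.fml A)] (Γ.fill .emp)
  /- nec: from Γ infer [Γ] -/
  | nec (S : FullSeq) :
      Step .nec [S] ⟨.emp, .br S.L S.R⟩
  /- ◇∘d: from Γ{[A∘]} infer Γ{(◇A)∘} -/
  | dDiaR (Γ : OutCtx) (A : Formula) :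
      Step .dDiaR [Γ.fillR (.br .emp (.fml A))] (Γ.fillR (.fml A.dia))
  /- □•d: from Γ{[A•]} infer Γ{(□A)•} -/
  | dBoxL (Γ : InCtx) (A : Formula) :
      Step .dBoxL [Γ.fill (LHS.br (.fml A))] (Γ.fill (.fml A.box))
  /- ◇∘t: from Γ{A∘} infer Γ{(◇A)∘} -/
  | tDiaR (Γ : OutCtx) (A : Formula) :
      Step .tDiaR [Γ.fillR (.fml A)] (Γ.fillR (.fml A.dia))
  /- □•t: from Γ{A•} infer Γ{(□A)•} -/
  | tBoxL (Γ : InCtx) (A : Formula) :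
      Step .tBoxL [Γ.fill (.fml A)] (Γ.fill (.fml A.box))
  /- ◇∘4: from Γ{[(◇A)∘,Δ]} infer Γ{(◇A)∘,[Δ]} -/
  | fourDiaR (Γ : OutCtx) (Δ : LHS) (A : Formula) :
      Step .fourDiaR [Γ.fillR (.br Δ (.fml A.dia))] (Γ.fillF ⟨Δ.br, .fml A.dia⟩)
  /- □•4: from Γ{[(□A)•,Δ]} infer Γ{(□A)•,[Δ]} -/
  | fourBoxLIn (Γ : InCtx) (Δ : LHS) (A : Formula) :
      Step .fourBoxL [Γ.fill (LHS.br ((LHS.fml A.box).comma Δ))]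
        (Γ.fill ((LHS.fml A.box).comma Δ.br))
  | fourBoxLOut (Γ : OutCtx) (Δ : FullSeq) (A : Formula) :
      Step .fourBoxL [Γ.fillR (.br ((LHS.fml A.box).comma Δ.L) Δ.R)]
        (Γ.fillF ⟨.fml A.box, .br Δ.L Δ.R⟩)
  /- d•: from Γ{[∅]} infer Γ{∅} -/
  | dSt (Γ : InCtx) :
      Step .dSt [Γ.fill (LHS.br .emp)] (Γ.fill .emp)
  /- t•: from Γ{[Σ]} infer Γ{Σ} -/
  | tStIn (Γ : InCtx) (Sg : LHS) :
      Step .tSt [Γ.fill Sg.br] (Γ.fill Sg)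
  | tStOut (Γ : OutCtx) (Sg : FullSeq) :
      Step .tSt [Γ.fillR (.br Sg.L Sg.R)] (Γ.fillF Sg)
  /- 4•: from Γ{[Σ]} infer Γ{[[Σ]]} -/
  | fourStIn (Γ : InCtx) (Sg : LHS) :
      Step .fourSt [Γ.fill Sg.br] (Γ.fill Sg.br.br)
  | fourStOut (Γ : OutCtx) (Sg : FullSeq) :
      Step .fourSt [Γ.fillR (.br Sg.L Sg.R)] (Γ.fillR (.br .emp (.br Sg.L Sg.R)))
  /- b•: from Γ{[[Σ],Δ]} infer Γ{Σ,[Δ]} -/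
  | bStIn (Γ : InCtx) (Sg Δ : LHS) :
      Step .bSt [Γ.fill (LHS.br (Sg.br.comma Δ))] (Γ.fill (Sg.comma Δ.br))
  | bStSig (Γ : OutCtx) (Sg : FullSeq) (Δ : LHS) :
      Step .bSt [Γ.fillR (.br Δ (.br Sg.L Sg.R))] (Γ.fillF ⟨Sg.L.comma Δ.br, Sg.R⟩)
  | bStDel (Γ : OutCtx) (Sg : LHS) (Δ : FullSeq) :
      Step .bSt [Γ.fillR (.br (Sg.br.comma Δ.L) Δ.R)] (Γ.fillF ⟨Sg, .br Δ.L Δ.R⟩)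
  /- 5•: from Γ{[[Σ],Δ]} infer Γ{[Σ],[Δ]} -/
  | fiveStIn (Γ : InCtx) (Sg Δ : LHS) :
      Step .fiveSt [Γ.fill (LHS.br (Sg.br.comma Δ))] (Γ.fill (Sg.br.comma Δ.br))
  | fiveStSig (Γ : OutCtx) (Sg : FullSeq) (Δ : LHS) :
      Step .fiveSt [Γ.fillR (.br Δ (.br Sg.L Sg.R))] (Γ.fillF ⟨Δ.br, .br Sg.L Sg.R⟩)
  | fiveStDel (Γ : OutCtx) (Sg : LHS) (Δ : FullSeq) :
      Step .fiveSt [Γ.fillR (.br (Sg.br.comma Δ.L) Δ.R)] (Γ.fillF ⟨Sg.br, .br Δ.L Δ.R⟩)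
  /- s4∘: from Γ{Δ{(◇A)∘}} infer Γ{(◇A)∘,Δ{∅}} -/
  | s4R (Γ Δ : OutCtx) (A : Formula) :
      Step .s4R [Γ.fillF (Δ.fillR (.fml A.dia))] (Γ.fillF ⟨Δ.fillE, .fml A.dia⟩)
  /- s4•: from Γ{Δ{(□A)•}} infer Γ{(□A)•,Δ{∅}} -/
  | s4LIn (Γ : InCtx) (Δ : OutCtx) (A : Formula) :
      Step .s4L [Γ.fill (Δ.fillL (.fml A.box))] (Γ.fill ((LHS.fml A.box).comma Δ.fillE))
  | s4LOut (Γ : OutCtx) (Δ : InCtx) (A : Formula) :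
      Step .s4L [Γ.fillF (Δ.fill (.fml A.box))]
        (Γ.fillF ⟨(LHS.fml A.box).comma (Δ.fill .emp).L, (Δ.fill .emp).R⟩)
  /- s4∘◇: from Γ{[Δ{A∘}]} infer Γ{(◇A)∘,[Δ{∅}]} -/
  | s4Rdia (Γ Δ : OutCtx) (A : Formula) :
      Step .s4Rdia [Γ.fillR (.br (Δ.fillR (.fml A)).L (Δ.fillR (.fml A)).R)]
        (Γ.fillF ⟨Δ.fillE.br, .fml A.dia⟩)
  /- s4•□: from Γ{[Δ{A•}]} infer Γ{(□A)•,[Δ{∅}]} -/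
  | s4LboxIn (Γ : InCtx) (Δ : OutCtx) (A : Formula) :
      Step .s4Lbox [Γ.fill (LHS.br (Δ.fillL (.fml A)))]
        (Γ.fill ((LHS.fml A.box).comma Δ.fillE.br))
  | s4LboxOut (Γ : OutCtx) (Δ : InCtx) (A : Formula) :
      Step .s4Lbox [Γ.fillR (.br (Δ.fill (.fml A)).L (Δ.fill (.fml A)).R)]
        (Γ.fillF ⟨.fml A.box, .br (Δ.fill .emp).L (Δ.fill .emp).R⟩)
  /- sb•: from Γ{Δ{[Σ]ⁿ}} infer Γ{Σ,Δ{∅}}, n the depth of Δ{ } -/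
  | sbStIn (Γ : InCtx) (Δ : OutCtx) (Sg : LHS) :
      Step .sbSt [Γ.fill (Δ.fillL (LHS.brn Δ.depth Sg))] (Γ.fill (Sg.comma Δ.fillE))
  | sbStMid (Γ : OutCtx) (Δ : InCtx) (Sg : LHS) :
      Step .sbSt [Γ.fillF (Δ.fill (LHS.brn Δ.depth Sg))]
        (Γ.fillF ⟨Sg.comma (Δ.fill .emp).L, (Δ.fill .emp).R⟩)
  | sbStOut (Γ Δ : OutCtx) (Sg : FullSeq) :
      Step .sbSt [Γ.fillF (Δ.fillF (FullSeq.nest Δ.depth Sg))]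
        (Γ.fillF ⟨Sg.L.comma Δ.fillE, Sg.R⟩)
  /- s5•: from Γ{Δ{[Σ]}} infer Γ{[Σ],Δ{∅}} -/
  | s5StIn (Γ : InCtx) (Δ : OutCtx) (Sg : LHS) :
      Step .s5St [Γ.fill (Δ.fillL Sg.br)] (Γ.fill (Sg.br.comma Δ.fillE))
  | s5StMid (Γ : OutCtx) (Δ : InCtx) (Sg : LHS) :
      Step .s5St [Γ.fillF (Δ.fill Sg.br)]
        (Γ.fillF ⟨Sg.br.comma (Δ.fill .emp).L, (Δ.fill .emp).R⟩)
  | s5StOut (Γ Δ : OutCtx) (Sg : FullSeq) :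
      Step .s5St [Γ.fillF (Δ.fillF ⟨.emp, .br Sg.L Sg.R⟩)]
        (Γ.fillF ⟨Δ.fillE, .br Sg.L Sg.R⟩)
  /- s5b•: from Γ{Δ{[Σ]ᵏ}} infer Γ{Σ,Δ{∅}}, 1 ≤ k ≤ depth of Δ{ } -/
  | s5bStIn (Γ : InCtx) (Δ : OutCtx) (Sg : LHS) (k : Nat)
      (h1 : 1 ≤ k) (h2 : k ≤ Δ.depth) :
      Step .s5bSt [Γ.fill (Δ.fillL (LHS.brn k Sg))] (Γ.fill (Sg.comma Δ.fillE))
  | s5bStMid (Γ : OutCtx) (Δ : InCtx) (Sg : LHS) (k : Nat)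
      (h1 : 1 ≤ k) (h2 : k ≤ Δ.depth) :
      Step .s5bSt [Γ.fillF (Δ.fill (LHS.brn k Sg))]
        (Γ.fillF ⟨Sg.comma (Δ.fill .emp).L, (Δ.fill .emp).R⟩)
  | s5bStOut (Γ Δ : OutCtx) (Sg : FullSeq) (k : Nat)
      (h1 : 1 ≤ k) (h2 : k ≤ Δ.depth) :
      Step .s5bSt [Γ.fillF (Δ.fillF (FullSeq.nest k Sg))]
        (Γ.fillF ⟨Sg.L.comma Δ.fillE, Sg.R⟩)
  /- sb5•: from Γ{Δ{[Σ]ᵏ}} infer Γ{[Σ],Δ{∅}}, 1 ≤ k ≤ depth of Δ{ } -/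
  | sb5StIn (Γ : InCtx) (Δ : OutCtx) (Sg : LHS) (k : Nat)
      (h1 : 1 ≤ k) (h2 : k ≤ Δ.depth) :
      Step .sb5St [Γ.fill (Δ.fillL (LHS.brn k Sg))] (Γ.fill (Sg.br.comma Δ.fillE))
  | sb5StMid (Γ : OutCtx) (Δ : InCtx) (Sg : LHS) (k : Nat)
      (h1 : 1 ≤ k) (h2 : k ≤ Δ.depth) :
      Step .sb5St [Γ.fillF (Δ.fill (LHS.brn k Sg))]
        (Γ.fillF ⟨Sg.br.comma (Δ.fill .emp).L, (Δ.fill .emp).R⟩)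
  | sb5StOut (Γ Δ : OutCtx) (Sg : FullSeq) (k : Nat)
      (h1 : 1 ≤ k) (h2 : k ≤ Δ.depth) :
      Step .sb5St [Γ.fillF (Δ.fillF (FullSeq.nest k Sg))]
        (Γ.fillF ⟨Δ.fillE, .br Sg.L Sg.R⟩)

/-! # Derivations -/

/-- `Deriv R n S`: the full sequent S has a derivation of height at most n
using the rules in R (sequents are treated up to AC-unit equivalence of
comma). -/
inductive Deriv (R : Set RuleName) : Nat → FullSeq → Prop
  | step {r : RuleName} {prems : List FullSeq} {S S' : FullSeq} {n : Nat} :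
      r ∈ R → Step r prems S → (∀ P ∈ prems, Deriv R n P) → SEq S S' →
      Deriv R (n+1) S'

/-- Provability in the system given by the rule set R. -/
def Provable (R : Set RuleName) (S : FullSeq) : Prop := ∃ n, Deriv R n S

/-- Derivations from a set of hypotheses (for derivability of rules). -/
inductive DerivFrom (R : Set RuleName) (H : Set FullSeq) : FullSeq → Prop
  | hyp {S S' : FullSeq} : S ∈ H → SEq S S' → DerivFrom R H S'
  | step {r : RuleName} {prems : List FullSeq} {S S' : FullSeq} :
      r ∈ R → Step r prems S → (∀ P ∈ prems, DerivFrom R H P) → SEq S S' →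
      DerivFrom R H S'

/-! # Rule sets -/

/-- The rules of NCK. -/
def NCKrules : Set RuleName :=
  {.id, .botL, .andL, .andR, .orL, .orR, .impL, .impR, .boxL, .boxR,
   .diaL, .diaR, .cont}

/-- The rules of NCK' (◇• replaced by ◇̂•). -/
def NCKP : Set RuleName :=
  {.id, .botL, .andL, .andR, .orL, .orR, .impL, .impR, .boxL, .boxR,
   .diaHatL, .diaR, .cont}

/-- X^{↓}: the logical ◇∘- and □•-rules for the axioms in X ⊆ {d,t,4}. -/
def lgRules (X : Set Ax) : Set RuleName := fun r =>
  (Ax.d ∈ X ∧ (r = .dDiaR ∨ r = .dBoxL)) ∨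
  (Ax.t ∈ X ∧ (r = .tDiaR ∨ r = .tBoxL)) ∨
  (Ax.four ∈ X ∧ (r = .fourDiaR ∨ r = .fourBoxL))

/-- The structural rule corresponding to a modal axiom. -/
def stRule : Ax → RuleName
  | .d => .dSt
  | .t => .tSt
  | .b => .bSt
  | .four => .fourSt
  | .five => .fiveSt

/-- Y•: the structural rules for the axioms in Y. -/
def stRules (Y : Set Ax) : Set RuleName := fun r => ∃ y ∈ Y, r = stRule y

/-- X^{↓}_s : the super variant of X^{↓}. -/
def lgRulesS (X : Set Ax) : Set RuleName := fun r =>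
  (r ∈ lgRules X ∧ r ≠ .fourDiaR ∧ r ≠ .fourBoxL) ∨
  (Ax.four ∈ X ∧ (r = .s4R ∨ r = .s4L ∨ r = .s4Rdia ∨ r = .s4Lbox))

/-- Y•_s : the super variant of Y•. -/
def stRulesS (Y : Set Ax) : Set RuleName := fun r =>
  (r ∈ stRules Y ∧ r ≠ .bSt ∧ r ≠ .fiveSt) ∨
  (Ax.b ∈ Y ∧ Ax.five ∉ Y ∧ r = .sbSt) ∨
  (Ax.five ∈ Y ∧ Ax.b ∉ Y ∧ r = .s5St) ∨
  (Ax.b ∈ Y ∧ Ax.five ∈ Y ∧ (r = .s5bSt ∨ r = .sb5St))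

/-- A safe pair of axiom sets. -/
def SafePair (X Y : Set Ax) : Prop :=
  X ⊆ {Ax.t, Ax.four} ∧ Y ⊆ {Ax.d, Ax.b, Ax.five} ∧
  (Ax.t ∈ X → Ax.five ∈ Y → Ax.b ∈ Y) ∧
  ((Ax.b ∈ Y ∨ Ax.five ∈ Y) → Ax.four ∈ X)

/-! Premise and conclusion of each rule differ only inside a context `Γ{ }`. The corresponding
formula is monotone in the output positions of a context (under `□`, `◇`, `∧` and to the right
of `⊃`) and antitone in its input positions, so it suffices to derive the implication between the
principal parts; each of these is the matching modal axiom combined with `k1`/`k2`. -/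

namespace Hck

variable {X : Set Ax}

theorem mono {X' : Set Ax} (hX : X ⊆ X') {A : Formula} (h : Hck X A) : Hck X' A := by
  induction h with
  | ax A hx => exact .ax A (hX hx)
  | mp _ _ ih₁ ih₂ => exact .mp ih₁ ih₂
  | nec _ ih => exact .nec ih
  | _ => constructor

theorem imp_self (A : Formula) : Hck X (A.imp A) :=
  .mp (.mp (.imp2 A (A.imp A) A) (.imp1 A (A.imp A))) (.imp1 A A)

theorem top : Hck X Formula.top := imp_self .bot

theorem imp_intro {A : Formula} (B : Formula) (h : Hck X A) : Hck X (B.imp A) :=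
  .mp (.imp1 A B) h

theorem imp_trans {A B C : Formula} (h₁ : Hck X (A.imp B)) (h₂ : Hck X (B.imp C)) :
    Hck X (A.imp C) :=
  .mp (.mp (.imp2 A B C) (imp_intro A h₂)) h₁

theorem imp_swap {A B C : Formula} (h : Hck X (A.imp (B.imp C))) :
    Hck X (B.imp (A.imp C)) :=
  imp_trans (.imp1 B A) (.mp (.imp2 A B C) h)

theorem imp_mono_right {C D : Formula} (A : Formula) (h : Hck X (C.imp D)) :
    Hck X ((A.imp C).imp (A.imp D)) :=
  .mp (.imp2 A C D) (imp_intro A h)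

theorem imp_anti_left {A B : Formula} (C : Formula) (h : Hck X (B.imp A)) :
    Hck X ((A.imp C).imp (B.imp C)) :=
  imp_swap (imp_trans h (imp_swap (imp_self (A.imp C))))

theorem box_mono {A B : Formula} (h : Hck X (A.imp B)) : Hck X (A.box.imp B.box) :=
  .mp (.k1 A B) (.nec h)

theorem dia_mono {A B : Formula} (h : Hck X (A.imp B)) : Hck X (A.dia.imp B.dia) :=
  .mp (.k2 A B) (.nec h)

theorem box_imp_dia_imp_dia_and (A B : Formula) :
    Hck X (A.box.imp (B.dia.imp (A.and B).dia)) :=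
  imp_trans (box_mono (.andI A B)) (.k2 B (A.and B))

theorem box_imp_dia (h : Ax.d ∈ X) (A : Formula) : Hck X (A.box.imp A.dia) := .ax A h

theorem imp_dia (h : Ax.t ∈ X) (A : Formula) : Hck X (A.imp A.dia) :=
  .mp (.andE1 _ _) (.ax A h)

theorem box_imp (h : Ax.t ∈ X) (A : Formula) : Hck X (A.box.imp A) :=
  .mp (.andE2 _ _) (.ax A h)

theorem imp_box_dia (h : Ax.b ∈ X) (A : Formula) : Hck X (A.imp A.dia.box) :=
  .mp (.andE1 _ _) (.ax A h)

theorem dia_box_imp (h : Ax.b ∈ X) (A : Formula) : Hck X (A.box.dia.imp A) :=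
  .mp (.andE2 _ _) (.ax A h)

theorem dia_dia_imp_dia (h : Ax.four ∈ X) (A : Formula) : Hck X (A.dia.dia.imp A.dia) :=
  .mp (.andE1 _ _) (.ax A h)

theorem box_imp_box_box (h : Ax.four ∈ X) (A : Formula) : Hck X (A.box.imp A.box.box) :=
  .mp (.andE2 _ _) (.ax A h)

theorem dia_imp_box_dia (h : Ax.five ∈ X) (A : Formula) : Hck X (A.dia.imp A.dia.box) :=
  .mp (.andE1 _ _) (.ax A h)

theorem dia_box_imp_box (h : Ax.five ∈ X) (A : Formula) : Hck X (A.box.dia.imp A.box) :=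
  .mp (.andE2 _ _) (.ax A h)

end Hck

/-- Natural deduction with the theorems of HCK+X as axioms. Its soundness `NatDed.toHck` is the
deduction theorem, which lets propositional steps below be written as natural-deduction terms. -/
inductive NatDed (X : Set Ax) : List Formula → Formula → Prop
  | hyp {Γ : List Formula} {A : Formula} : A ∈ Γ → NatDed X Γ A
  | thm {Γ : List Formula} {A : Formula} : Hck X A → NatDed X Γ A
  | impI {Γ : List Formula} {A B : Formula} : NatDed X (A :: Γ) B → NatDed X Γ (A.imp B)
  | impE {Γ : List Formula} {A B : Formula} :
      NatDed X Γ (A.imp B) → NatDed X Γ A → NatDed X Γ B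
  | andI {Γ : List Formula} {A B : Formula} :
      NatDed X Γ A → NatDed X Γ B → NatDed X Γ (A.and B)
  | andE1 {Γ : List Formula} {A B : Formula} : NatDed X Γ (A.and B) → NatDed X Γ A
  | andE2 {Γ : List Formula} {A B : Formula} : NatDed X Γ (A.and B) → NatDed X Γ B

namespace NatDed

variable {X : Set Ax}

def conj : List Formula → Formula
  | [] => Formula.top
  | A :: Γ => A.and (conj Γ)

theorem conj_imp_of_mem {A : Formula} :
    ∀ {Γ : List Formula}, A ∈ Γ → Hck X ((conj Γ).imp A)
  | B :: Γ, h => by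
    rcases List.mem_cons.mp h with rfl | h
    · exact .andE1 A (conj Γ)
    · exact Hck.imp_trans (.andE2 B (conj Γ)) (conj_imp_of_mem h)

theorem conj_imp {Γ : List Formula} {A : Formula} (h : NatDed X Γ A) :
    Hck X ((conj Γ).imp A) := by
  induction h with
  | hyp h => exact conj_imp_of_mem h
  | thm h => exact Hck.imp_intro _ h
  | impI _ ih => exact Hck.imp_trans (Hck.imp_swap (.andI _ _)) (Hck.imp_mono_right _ ih)
  | impE _ _ ih₁ ih₂ => exact .mp (.mp (.imp2 _ _ _) ih₁) ih₂
  | andI _ _ ih₁ ih₂ => exact .mp (.mp (.imp2 _ _ _) (Hck.imp_trans ih₁ (.andI _ _))) ih₂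
  | andE1 _ ih => exact Hck.imp_trans ih (.andE1 _ _)
  | andE2 _ ih => exact Hck.imp_trans ih (.andE2 _ _)

theorem toHck {A : Formula} (h : NatDed X [] A) : Hck X A := .mp h.conj_imp Hck.top

theorem hyp0 {Γ : List Formula} {A : Formula} : NatDed X (A :: Γ) A :=
  .hyp (.head _)

theorem hyp1 {Γ : List Formula} {A B : Formula} : NatDed X (B :: A :: Γ) A :=
  .hyp (.tail _ (.head _))

theorem hyp2 {Γ : List Formula} {A B C : Formula} : NatDed X (C :: B :: A :: Γ) A :=
  .hyp (.tail _ (.tail _ (.head _)))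

end NatDed

namespace Hck

variable {X : Set Ax}

theorem curry (A B C : Formula) :
    Hck X (((A.and B).imp C).imp (A.imp (B.imp C))) :=
  NatDed.toHck <| .impI <| .impI <| .impI <|
    .impE .hyp2 (.andI .hyp1 .hyp0)

theorem and_mono_right {B B' : Formula} (A : Formula) (h : Hck X (B.imp B')) :
    Hck X ((A.and B).imp (A.and B')) :=
  NatDed.toHck <| .impI <| .andI (.andE1 .hyp0) (.impE (.thm h) (.andE2 .hyp0))

theorem fillR_mono (Γ : OutCtx) {P Q : RHS} (h : Hck X (P.fm.imp Q.fm)) :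
    Hck X ((Γ.fillR P).fm.imp (Γ.fillR Q).fm) := by
  induction Γ with
  | hole Φ => exact imp_mono_right Φ.fm h
  | cons Φ _ ih => exact imp_mono_right Φ.fm (box_mono ih)

theorem fillR_imp_fillF (Γ : OutCtx) {Ψ : RHS} {S : FullSeq} (h : Hck X (Ψ.fm.imp S.fm)) :
    Hck X ((Γ.fillR Ψ).fm.imp (Γ.fillF S).fm) := by
  induction Γ with
  | hole Φ =>
    exact NatDed.toHck <| .impI <| .impI <|
      .impE (.impE (.thm h) (.impE .hyp1 (.andE1 .hyp0)))
        (.andE2 .hyp0)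
  | cons Φ _ ih => exact imp_mono_right Φ.fm (box_mono ih)

theorem fillF_mono (Γ : OutCtx) {S T : FullSeq} (h : Hck X (S.fm.imp T.fm)) :
    Hck X ((Γ.fillF S).fm.imp (Γ.fillF T).fm) := by
  induction Γ with
  | hole Φ =>
    exact NatDed.toHck <| .impI <| .impI <|
      .impE (.impE (.thm h) (.impI (.impE .hyp2
          (.andI (.andE1 .hyp1) .hyp0))))
        (.andE2 .hyp0)
  | cons Φ _ ih => exact imp_mono_right Φ.fm (box_mono ih)

theorem fillL_mono (C : OutCtx) {Δ Δ' : LHS} (h : Hck X (Δ.fm.imp Δ'.fm)) :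
    Hck X ((C.fillL Δ).fm.imp (C.fillL Δ').fm) := by
  induction C with
  | hole Φ => exact and_mono_right Φ.fm h
  | cons Φ _ ih => exact and_mono_right Φ.fm (dia_mono ih)

theorem fill_anti (G : InCtx) {Δ Δ' : LHS} (h : Hck X (Δ'.fm.imp Δ.fm)) :
    Hck X ((G.fill Δ).fm.imp (G.fill Δ').fm) :=
  fillF_mono G.outer (imp_anti_left G.out.fm (fillL_mono G.inner h))

theorem box_imp_imp_dia_imp_of_dia_imp {B C : Formula} (h : Hck X (B.dia.imp C)) (D : Formula) :
    Hck X ((D.imp B).box.imp (D.dia.imp C)) :=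
  imp_trans (.k2 D B) (imp_mono_right D.dia h)

theorem and_dia_imp_dia_and_of_imp_box {P Q : Formula} (h : Hck X (P.imp Q.box)) (D : Formula) :
    Hck X ((P.and D.dia).imp (Q.and D).dia) :=
  NatDed.toHck <| .impI <|
    .impE (.impE (.thm (box_imp_dia_imp_dia_and Q D)) (.impE (.thm h) (.andE1 .hyp0)))
      (.andE2 .hyp0)

theorem box_and_imp_imp_of_imp_box {P Q : Formula} (h : Hck X (P.imp Q.box)) (L R : Formula) :
    Hck X (((Q.and L).imp R).box.imp (P.imp (L.imp R).box)) :=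
  NatDed.toHck <| .impI <| .impI <|
    .impE (.impE (.thm (.k1 Q (L.imp R)))
        (.impE (.thm (box_mono (curry Q L R))) .hyp1))
      (.impE (.thm h) .hyp0)

theorem box_top_imp_imp_dia (hd : Ax.d ∈ X) (A : Formula) :
    Hck X ((Formula.top.imp A).box.imp A.dia) :=
  imp_trans (.mp (imp_swap (.k1 Formula.top A)) (.nec top)) (box_imp_dia hd A)

theorem top_imp_dia_top (hd : Ax.d ∈ X) : Hck X (Formula.top.imp Formula.top.dia) :=
  imp_intro _ (.mp (box_imp_dia hd Formula.top) (.nec top))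

theorem box_imp_box_top_imp_box (h4 : Ax.four ∈ X) (A : Formula) :
    Hck X (A.box.imp (Formula.top.imp A.box).box) :=
  imp_trans (box_imp_box_box h4 A) (box_mono (.imp1 A.box Formula.top))

theorem box_imp_box_imp_and_dia_imp (hb : Ax.b ∈ X) (D A B : Formula) :
    Hck X ((D.imp (A.imp B).box).box.imp ((A.and D.dia).imp B)) :=
  NatDed.toHck <| .impI <| .impI <|
    .impE (.impE (.impE (.thm (box_imp_imp_dia_imp_of_dia_imp (dia_box_imp hb (A.imp B)) D)) .hyp1)
        (.andE2 .hyp0))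
      (.andE1 .hyp0)

theorem of_step_lgRules {r : RuleName} (hr : r ∈ lgRules X) {Γ₁ Γ₂ : FullSeq}
    (h : Step r [Γ₁] Γ₂) : Hck X (Γ₁.fm.imp Γ₂.fm) := by
  rcases hr with ⟨hd, rfl | rfl⟩ | ⟨ht, rfl | rfl⟩ | ⟨h4, rfl | rfl⟩ <;> cases h
  case dDiaR Γ A => exact fillR_mono Γ (box_top_imp_imp_dia hd A)
  case dBoxL Γ A => exact fill_anti Γ (box_imp_dia hd A)
  case tDiaR Γ A => exact fillR_mono Γ (imp_dia ht A)
  case tBoxL Γ A => exact fill_anti Γ (box_imp ht A)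
  case fourDiaR Γ Δ A =>
    exact fillR_imp_fillF Γ (box_imp_imp_dia_imp_of_dia_imp (dia_dia_imp_dia h4 A) Δ.fm)
  case fourBoxLIn Γ Δ A =>
    exact fill_anti Γ (and_dia_imp_dia_and_of_imp_box (box_imp_box_box h4 A) Δ.fm)
  case fourBoxLOut Γ Δ A =>
    exact fillR_imp_fillF Γ (box_and_imp_imp_of_imp_box (box_imp_box_box h4 A) Δ.L.fm Δ.R.fm)

theorem of_step_stRule {y : Ax} (hy : y ∈ X) {Γ₁ Γ₂ : FullSeq}
    (h : Step (stRule y) [Γ₁] Γ₂) : Hck X (Γ₁.fm.imp Γ₂.fm) := by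
  cases y <;> cases h
  case dSt Γ => exact fill_anti Γ (top_imp_dia_top hy)
  case tStIn Γ S => exact fill_anti Γ (imp_dia hy S.fm)
  case tStOut Γ S => exact fillR_imp_fillF Γ (box_imp hy S.fm)
  case bStIn Γ S Δ =>
    exact fill_anti Γ (and_dia_imp_dia_and_of_imp_box (imp_box_dia hy S.fm) Δ.fm)
  case bStSig Γ S Δ =>
    exact fillR_imp_fillF Γ (box_imp_box_imp_and_dia_imp hy Δ.fm S.L.fm S.R.fm)
  case bStDel Γ S Δ =>
    exact fillR_imp_fillF Γ (box_and_imp_imp_of_imp_box (imp_box_dia hy S.fm) Δ.L.fm Δ.R.fm)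
  case fourStIn Γ S => exact fill_anti Γ (dia_dia_imp_dia hy S.fm)
  case fourStOut Γ S => exact fillR_mono Γ (box_imp_box_top_imp_box hy S.fm)
  case fiveStIn Γ S Δ =>
    exact fill_anti Γ (and_dia_imp_dia_and_of_imp_box (dia_imp_box_dia hy S.fm) Δ.fm)
  case fiveStSig Γ S Δ =>
    exact fillR_imp_fillF Γ (box_imp_imp_dia_imp_of_dia_imp (dia_box_imp_box hy S.fm) Δ.fm)
  case fiveStDel Γ S Δ =>
    exact fillR_imp_fillF Γ (box_and_imp_imp_of_imp_box (dia_imp_box_dia hy S.fm) Δ.L.fm Δ.R.fm)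

end Hck

theorem statement14_general (X Y : Set Ax)
    (r : RuleName) (hr : r ∈ lgRules X ∪ stRules Y)
    (Γ₁ Γ₂ : FullSeq) (h : Step r [Γ₁] Γ₂) :
    Hck (X ∪ Y) (Γ₁.fm.imp Γ₂.fm) := by
  rcases hr with hr | ⟨y, hy, rfl⟩
  · exact (Hck.of_step_lgRules hr h).mono Set.subset_union_left
  · exact (Hck.of_step_stRule hy h).mono Set.subset_union_right

/-- Lemma 4.12: for x ∈ X ⊆ {d,t,4} and y ∈ Y ⊆ {d,t,b,4,5},
any instance, with premise Γ₁ and conclusion Γ₂, of one of the rules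
◇∘x, □•x, or y•, satisfies: fm(Γ₁)⊃fm(Γ₂) is provable in HCK+X+Y. -/
theorem statement14 (X Y : Set Ax)
    (hX : X ⊆ {Ax.d, Ax.t, Ax.four})
    (hY : Y ⊆ {Ax.d, Ax.t, Ax.b, Ax.four, Ax.five})
    (r : RuleName) (hr : r ∈ lgRules X ∪ stRules Y)
    (Γ₁ Γ₂ : FullSeq) (h : Step r [Γ₁] Γ₂) :
    Hck (X ∪ Y) (Γ₁.fm.imp Γ₂.fm) :=
  statement14_general X Y r hr Γ₁ Γ₂ h
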